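/- arXiv:1309.2025 — 3 statements merged into one kernel-verified Lean document; each statement's English description precedes it below -/
import Mathlib

section
/- Let K be a number field of degree n. The set {x ∈ ℤ + nO_K : Tr_{K/ℚ}(x) = 0} is a free ℤ-module of rank n − 1. -/
/-!
`M` is a subgroup of the lattice `𝓞 K`, hence free of finite rank, and that rank is the
`ℚ`-dimension of its `ℚ`-span. Every element of `K` has a nonzero integer multiple in `n 𝓞 K`,
so `M` spans the whole trace-zero hyperplane, which has dimension `n - 1` because the trace
of a separable extension is a nonzero functional.
-/

open NumberField Module Submodule

section RatSpan

variable {V : Type*} [AddCommGroup V] [Module ℚ V]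

theorem Submodule.finrank_span_rat_eq (M : Submodule ℤ V) [Module.Free ℤ M] [Module.Finite ℤ M] :
    finrank ℚ (span ℚ (M : Set V)) = finrank ℤ M := by
  set b := Module.Free.chooseBasis ℤ M
  have hind : LinearIndependent ℚ (M.subtype ∘ b) :=
    (LinearIndependent.iff_fractionRing ℤ ℚ).mp (b.linearIndependent.map' M.subtype M.ker_subtype)
  have hspan : span ℤ (Set.range (M.subtype ∘ b)) = M := by
    rw [Set.range_comp, ← Submodule.map_span, b.span_eq, Submodule.map_top, Submodule.range_subtype]
  rw [← hspan, span_span_of_tower, finrank_span_eq_card hind, hspan,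
    Module.finrank_eq_card_chooseBasisIndex]

theorem Submodule.span_rat_inf_restrictScalars {N : Submodule ℤ V}
    (hN : ∀ x : V, ∃ k : ℤ, k ≠ 0 ∧ k • x ∈ N) (W : Submodule ℚ V) :
    span ℚ ((N ⊓ W.restrictScalars ℤ : Submodule ℤ V) : Set V) = W := by
  refine le_antisymm (span_le.mpr fun x hx ↦ hx.2) fun x hx ↦ ?_
  obtain ⟨k, hk, hkx⟩ := hN x
  have hkx' : (k : ℚ) • x ∈ (N ⊓ W.restrictScalars ℤ : Submodule ℤ V) :=
    ⟨by rwa [Int.cast_smul_eq_zsmul], W.smul_mem _ hx⟩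
  simpa [smul_smul, hk] using (span ℚ _).smul_mem (k : ℚ)⁻¹ (subset_span hkx')

end RatSpan

namespace NumberField

variable {K : Type*} [Field K] [NumberField K]

theorem exists_int_smul_eq_natCast_mul {n : ℕ} (hn : n ≠ 0) (x : K) :
    ∃ k : ℤ, k ≠ 0 ∧ ∃ y : 𝓞 K, k • x = n * y := by
  have hx : IsAlgebraic ℤ x :=
    (IsFractionRing.isAlgebraic_iff ℤ ℚ K).mpr (Algebra.IsAlgebraic.isAlgebraic x)
  obtain ⟨d, hd, hdx⟩ := hx.exists_integral_multiple
  refine ⟨n * d, mul_ne_zero (by exact_mod_cast hn) hd, ⟨d • x, hdx⟩, ?_⟩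
  simp [mul_smul]

theorem span_insert_one_natCast_mul_le_span_integralBasis (n : ℕ) :
    span ℤ (insert (1 : K) {x : K | ∃ y : 𝓞 K, x = n * y}) ≤
      span ℤ (Set.range (integralBasis K)) := by
  refine span_le.mpr ?_
  rintro x (rfl | ⟨y, rfl⟩) <;> rw [SetLike.mem_coe, mem_span_integralBasis]
  · exact ⟨1, map_one _⟩
  · exact ⟨n * y, by simp⟩

end NumberField

/-- For a number field `K` of degree `n`, the set `{x ∈ ℤ + n𝓞_K : Tr_{K/ℚ}(x) = 0}`
is a free `ℤ`-module of rank `n - 1`. -/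
theorem trace_zero_submodule_free_rank (K : Type*) [Field K] [NumberField K]
    (n : ℕ) (hn : n = Module.finrank ℚ K)
    (A : Submodule ℤ K)
    (hA : A = Submodule.span ℤ (insert (1 : K) {x : K | ∃ y : 𝓞 K, x = (n : K) * (y : K)}))
    (M : Submodule ℤ K)
    (hM : M = A ⊓ (LinearMap.ker ((Algebra.trace ℚ K).restrictScalars ℤ))) :
    Module.Free ℤ M ∧ Module.finrank ℤ M = n - 1 := by
  have : IsNoetherian ℤ (span ℤ (Set.range (integralBasis K))) :=
    isNoetherian_of_fg_of_noetherian _ (fg_span (Set.finite_range _))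
  have : IsNoetherian ℤ M := isNoetherian_of_le <|
    hM ▸ hA ▸ inf_le_left.trans (span_insert_one_natCast_mul_le_span_integralBasis n)
  have hfree : Module.Free ℤ M := Module.free_of_finite_type_torsion_free'
  have hA_spans (x : K) : ∃ k : ℤ, k ≠ 0 ∧ k • x ∈ A := by
    obtain ⟨k, hk, y, hkx⟩ := exists_int_smul_eq_natCast_mul (hn ▸ Module.finrank_pos.ne') x
    exact ⟨k, hk, hA ▸ subset_span (Or.inr ⟨y, hkx⟩)⟩
  have hM_span : span ℚ (M : Set K) = LinearMap.ker (Algebra.trace ℚ K) := by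
    rw [hM, LinearMap.ker_restrictScalars]
    exact span_rat_inf_restrictScalars hA_spans _
  refine ⟨hfree, ?_⟩
  rw [← M.finrank_span_rat_eq, hM_span, hn,
    ← Dual.finrank_ker_add_one_of_ne_zero (Algebra.trace_ne_zero ℚ K), Nat.add_sub_cancel]
end

section
/- Let K be a number field of degree n and q the Minkowski quadratic form on K. The restriction of q to the trace-zero submodule {x ∈ ℤ + nO_K : Tr(x) = 0} equals n² times the restriction of q to the orthogonal projection of O_K onto the hyperplane orthogonal to 1; in particular the two definitions of the shape of O_K agree up to scaling by ℝ^×. -/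
open NumberField

theorem natCast_mul_sub_algebraMap_eq_mul_sub_div {K : Type*} [Ring K] [Algebra ℚ K]
    {n : ℕ} (hn : n ≠ 0) (y : K) (c : ℚ) :
    (n : K) * y - algebraMap ℚ K c = n * (y - algebraMap ℚ K (c / n)) := by
  rw [mul_sub, ← map_natCast (algebraMap ℚ K), ← map_mul,
    mul_div_cancel₀ _ (Nat.cast_ne_zero.mpr hn)]

theorem finsum_norm_sq_natCast_mul {K : Type*} [Semiring K] (n : ℕ) (y : K) :
    ∑ᶠ φ : K →+* ℂ, ‖φ (n * y)‖ ^ 2 = (n : ℝ) ^ 2 * ∑ᶠ φ : K →+* ℂ, ‖φ y‖ ^ 2 := by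
  rw [mul_finsum]
  refine finsum_congr fun φ => ?_
  rw [map_mul, map_natCast, norm_mul, Complex.norm_natCast, mul_pow]

/-- Let `q` be the Minkowski form `q(x) = Σσᵢ(x)² + 2Σ|τⱼ(x)|² = Σ_{φ:K→ℂ} |φ(x)|²`.
For `x ∈ 𝓞 K`, the value of `q` at the trace-zero element `n·x − Tr(x)·1 ∈ ℤ + n𝓞_K`
equals `n²` times the value of `q` at the orthogonal projection `x − (Tr(x)/n)·1` of `x`
onto the hyperplane orthogonal to `1`; in particular the two definitions of the shape of
`𝓞 K` agree up to scaling by `ℝˣ`. -/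
theorem trace_zero_shape_eq_sq_scaling_of_projection (K : Type*) [Field K] [NumberField K]
    (n : ℕ) (hn : n = Module.finrank ℚ K)
    (q : K → ℝ) (hq : ∀ x : K, q x = ∑ᶠ φ : K →+* ℂ, ‖φ x‖ ^ 2)
    (x : 𝓞 K) :
    q ((n : K) * (x : K) - algebraMap ℚ K (Algebra.trace ℚ K (x : K))) =
      (n : ℝ) ^ 2 * q ((x : K) - algebraMap ℚ K (Algebra.trace ℚ K (x : K) / n)) := by
  have hn0 : n ≠ 0 := hn ▸ Module.finrank_pos.ne'
  rw [natCast_mul_sub_algebraMap_eq_mul_sub_div hn0, hq, hq, finsum_norm_sq_natCast_mul]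
end

section
/- If K is a number field admitting a nontrivial field automorphism σ of order 2, then the lattice O_K with the Minkowski quadratic form q admits a nontrivial isometry of order 2 fixing 1; consequently the shape of O_K admits a nontrivial automorphism of order 2 in GL_{n−1}(ℤ). -/
open NumberField

/-! The restriction of `σ` to `𝓞 K` is the isometry. It is nontrivial because `K` is the fraction
field of `𝓞 K`, so an automorphism of `K` is determined by its values on `𝓞 K`, and it preserves
`q` because precomposition with `σ` permutes the complex embeddings of `K`. -/

namespace RingEquiv

variable {R S T : Type*} [Semiring R] [Semiring S] [Semiring T]

def ringHomCongrLeft (σ : R ≃+* S) : (S →+* T) ≃ (R →+* T) where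
  toFun φ := φ.comp σ
  invFun φ := φ.comp σ.symm
  left_inv φ := by ext; simp
  right_inv φ := by ext; simp

theorem finsum_ringHom_apply_apply {M : Type*} [AddCommMonoid M] (σ : R ≃+* R)
    (g : T → M) (x : R) : ∑ᶠ φ : R →+* T, g (φ (σ x)) = ∑ᶠ φ : R →+* T, g (φ x) :=
  finsum_comp_equiv σ.ringHomCongrLeft (f := fun φ => g (φ x))

end RingEquiv

namespace NumberField.RingOfIntegers

variable {K L M : Type*} [Field K] [Field L] [Field M]

theorem mapRingEquiv_injective [NumberField K] :
    Function.Injective (mapRingEquiv : (K ≃+* L) → (𝓞 K ≃+* 𝓞 L)) := by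
  intro σ τ h
  refine RingEquiv.toRingHom_injective <| IsLocalization.ringHom_ext (nonZeroDivisors (𝓞 K)) ?_
  ext x
  exact congrArg Subtype.val (DFunLike.congr_fun h x)

theorem mapRingEquiv_refl : mapRingEquiv (RingEquiv.refl K) = RingEquiv.refl (𝓞 K) := rfl

theorem mapRingEquiv_trans (σ : K ≃+* L) (τ : L ≃+* M) :
    mapRingEquiv (σ.trans τ) = (mapRingEquiv σ).trans (mapRingEquiv τ) := rfl

end NumberField.RingOfIntegers

/-- If a number field `K` admits a nontrivial field automorphism `σ` of order 2, then the
lattice `𝓞 K` with the Minkowski form `q(x) = Σ_{φ:K→ℂ} |φ(x)|²` admits a nontrivial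
isometry of order 2 fixing `1`. -/
theorem exists_order_two_isometry_of_ring_of_integers (K : Type*) [Field K] [NumberField K]
    (σ : K ≃+* K) (hσ : σ ≠ RingEquiv.refl K) (hσ2 : σ.trans σ = RingEquiv.refl K)
    (q : K → ℝ) (hq : ∀ x : K, q x = ∑ᶠ φ : K →+* ℂ, ‖φ x‖ ^ 2) :
    ∃ T : 𝓞 K ≃ₗ[ℤ] 𝓞 K,
      T ≠ LinearEquiv.refl ℤ (𝓞 K) ∧
      T.trans T = LinearEquiv.refl ℤ (𝓞 K) ∧
      T 1 = 1 ∧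
      ∀ x : 𝓞 K, q ((T x : K)) = q (x : K) := by
  set e := RingOfIntegers.mapRingEquiv σ
  have he2 : e.trans e = RingEquiv.refl (𝓞 K) := by
    rw [← RingOfIntegers.mapRingEquiv_trans, hσ2, RingOfIntegers.mapRingEquiv_refl]
  refine ⟨e.toAddEquiv.toIntLinearEquiv, fun h => hσ ?_,
    LinearEquiv.ext fun x => DFunLike.congr_fun he2 x, map_one e, fun x => ?_⟩
  · exact RingOfIntegers.mapRingEquiv_injective <|
      RingEquiv.ext fun y => LinearEquiv.congr_fun h y
  · rw [hq, hq]
    exact σ.finsum_ringHom_apply_apply (fun z : ℂ => ‖z‖ ^ 2) x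
end
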